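/- arXiv:1911.11229 — 9 statements merged into one kernel-verified Lean document; each statement's English description precedes it below -/
import Mathlib

section
/- Let V be a finite type, A : V → V → Prop the adjacency relation of a directed graph, and s, t ∈ V. Let X ⊆ V with s ∉ X and t ∉ X. Suppose that t is not reachable from s via the relation A'(u,v) := A(u,v) ∧ ¬(u ∈ X ∧ v ∈ X) (i.e., after deleting from G all arcs with both endpoints in X, there is no directed s–t path). Then X is an st-vertex cut of the square digraph G²: t is not reachable from s via the relation B(u,v) := A²(u,v) ∧ u ∉ X ∧ v ∉ X, where A²(u,v) := A(u,v) ∨ ∃ w, A(u,w) ∧ A(w,v). -/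
open Relation

theorem reflTransGen_deleteInducedArcs_of_square {V : Type*} {A : V → V → Prop} {X : Set V}
    {u v : V} (hu : u ∉ X) (hv : v ∉ X) (huv : A u v ∨ ∃ w, A u w ∧ A w v) :
    ReflTransGen (fun u v => A u v ∧ ¬ (u ∈ X ∧ v ∈ X)) u v := by
  rcases huv with huv | ⟨w, huw, hwv⟩
  · exact .single ⟨huv, fun h => hu h.1⟩
  · exact .head ⟨huw, fun h => hu h.1⟩ (.single ⟨hwv, fun h => hv h.2⟩)

theorem stmt_0_general {V : Type*} (A : V → V → Prop) (s t : V)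
    (X : Set V)
    (h : ¬ Relation.ReflTransGen (fun u v => A u v ∧ ¬ (u ∈ X ∧ v ∈ X)) s t) :
    ¬ Relation.ReflTransGen
      (fun u v => (A u v ∨ ∃ w, A u w ∧ A w v) ∧ u ∉ X ∧ v ∉ X) s t := fun hst =>
  h <| ReflTransGen.lift' id
    (fun _ _ ⟨huv, hu, hv⟩ => reflTransGen_deleteInducedArcs_of_square hu hv huv) s t hst

/-- Forward direction of the DDNP zero-detection correctness: if deleting from `G` all arcs
with both endpoints in `X` leaves no directed `s`–`t` path, then `X` is an `st`-vertex cut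
of the square digraph `G²`. -/
theorem stmt_0 {V : Type*} [Fintype V] (A : V → V → Prop) (s t : V)
    (X : Set V) (hs : s ∉ X) (ht : t ∉ X)
    (h : ¬ Relation.ReflTransGen (fun u v => A u v ∧ ¬ (u ∈ X ∧ v ∈ X)) s t) :
    ¬ Relation.ReflTransGen
      (fun u v => (A u v ∨ ∃ w, A u w ∧ A w v) ∧ u ∉ X ∧ v ∉ X) s t :=
  stmt_0_general A s t X h
end

section
/- Let V be a finite type, A : V → V → Prop the adjacency relation of a directed graph, and s, t ∈ V. Let Y ⊆ V with s ∉ Y and t ∉ Y. Suppose Y is an st-vertex cut of the square digraph G², i.e., t is not reachable from s via the relation B(u,v) := A²(u,v) ∧ u ∉ Y ∧ v ∉ Y, where A²(u,v) := A(u,v) ∨ ∃ w, A(u,w) ∧ A(w,v). Then after deleting from G all arcs with both endpoints in Y, there is no directed s–t path: t is not reachable from s via A'(u,v) := A(u,v) ∧ ¬(u ∈ Y ∧ v ∈ Y). -/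
/-!
Walk along an `s`–`t` path of `G` that uses no arc inside `Y`. Since `s, t ∉ Y` and no two
consecutive vertices lie in `Y`, every vertex of the path in `Y` sits between two vertices
outside `Y`, and can be jumped over by an arc of `G²`. What remains is an `s`–`t` path of `G²`
avoiding `Y`.
-/

namespace Relation

variable {V : Type*}

def deleteInducedArcs (A : V → V → Prop) (Y : Set V) : V → V → Prop :=
  fun u v => A u v ∧ ¬ (u ∈ Y ∧ v ∈ Y)

def square (A : V → V → Prop) : V → V → Prop :=
  fun u v => A u v ∨ ∃ w, A u w ∧ A w v

def avoiding (R : V → V → Prop) (Y : Set V) : V → V → Prop :=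
  fun u v => R u v ∧ u ∉ Y ∧ v ∉ Y

variable {A : V → V → Prop} {Y : Set V} {t : V}

-- The second conjunct is the invariant at a vertex of `Y`: it is entered from outside `Y`.
theorem reflTransGen_avoiding_square_of_deleteInducedArcs {x : V} (ht : t ∉ Y)
    (hx : ReflTransGen (deleteInducedArcs A Y) x t) :
    (x ∉ Y → ReflTransGen (avoiding (square A) Y) x t) ∧
      (x ∈ Y → ∀ u ∉ Y, A u x → ReflTransGen (avoiding (square A) Y) u t) := by
  induction hx using ReflTransGen.head_induction_on with
  | refl => exact ⟨fun _ => .refl, fun htY => absurd htY ht⟩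
  | @head a b hab _ ih =>
    obtain ⟨hA, hnot⟩ := hab
    constructor
    · intro haY
      by_cases hbY : b ∈ Y
      · exact ih.2 hbY a haY hA
      · exact .head ⟨.inl hA, haY, hbY⟩ (ih.1 hbY)
    · intro haY u huY hu
      have hbY : b ∉ Y := fun hbY => hnot ⟨haY, hbY⟩
      exact .head ⟨.inr ⟨a, hu, hA⟩, huY, hbY⟩ (ih.1 hbY)

theorem reflTransGen_avoiding_square {s : V} (hs : s ∉ Y) (ht : t ∉ Y)
    (h : ReflTransGen (deleteInducedArcs A Y) s t) :
    ReflTransGen (avoiding (square A) Y) s t :=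
  (reflTransGen_avoiding_square_of_deleteInducedArcs ht h).1 hs

end Relation

theorem stmt_1_general {V : Type*} (A : V → V → Prop) (s t : V)
    (Y : Set V) (hs : s ∉ Y) (ht : t ∉ Y)
    (h : ¬ Relation.ReflTransGen
      (fun u v => (A u v ∨ ∃ w, A u w ∧ A w v) ∧ u ∉ Y ∧ v ∉ Y) s t) :
    ¬ Relation.ReflTransGen (fun u v => A u v ∧ ¬ (u ∈ Y ∧ v ∈ Y)) s t :=
  fun hst => h (Relation.reflTransGen_avoiding_square hs ht hst)

/-- Converse direction of the DDNP zero-detection correctness: if `Y` is an `st`-vertex cut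
of the square digraph `G²`, then deleting from `G` all arcs with both endpoints in `Y`
leaves no directed `s`–`t` path. -/
theorem stmt_1 {V : Type*} [Fintype V] (A : V → V → Prop) (s t : V)
    (Y : Set V) (hs : s ∉ Y) (ht : t ∉ Y)
    (h : ¬ Relation.ReflTransGen
      (fun u v => (A u v ∨ ∃ w, A u w ∧ A w v) ∧ u ∉ Y ∧ v ∉ Y) s t) :
    ¬ Relation.ReflTransGen (fun u v => A u v ∧ ¬ (u ∈ Y ∧ v ∈ Y)) s t :=
  stmt_1_general A s t Y hs ht h
end

section
/- Let G be a finite simple graph, let k ≥ 2 be a natural number, let β ≥ 1 be a real number, and let l ≥ 0 be a real number. Suppose V' is a set of vertices of G with k ≤ |V'| and (|V'| : ℝ) ≤ β·k, such that the number of edges of G with both endpoints in V' is at least l. Then there exists a set S ⊆ V' with |S| = k such that the number of edges of G with both endpoints in S is at least l / (2·β²). -/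
/-!
Average over all `k`-subsets `S` of `V'`. An edge inside `V'` lies inside exactly
`C(n-2, k-2)` of the `C(n, k)` subsets, where `n = |V'|`, so on average `S` induces
`e(V') · C(k,2) / C(n,2)` edges (by `C(n,k) C(k,2) = C(n,2) C(n-2,k-2)`), and some `S`
does at least that well. Finally `C(n,2) ≤ n²/2 ≤ β²k²/2 ≤ 2β² C(k,2)` as `k ≥ 2`.
-/

open Finset

namespace Finset

variable {α : Type*} [DecidableEq α] {s : Finset α} {E : Finset (Sym2 α)} {k : ℕ}

lemma mem_sym2_iff_toFinset_subset {e : Sym2 α} : e ∈ s.sym2 ↔ e.toFinset ⊆ s := by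
  simp [mem_sym2_iff, subset_iff]

lemma card_filter_powersetCard_mem_sym2 {e : Sym2 α} (he : e ∈ s.sym2) (hdiag : ¬e.IsDiag)
    (hk : 2 ≤ k) : #{S ∈ s.powersetCard k | e ∈ S.sym2} = (#s - 2).choose (k - 2) := by
  have hcard := Sym2.card_toFinset_of_not_isDiag e hdiag
  simp_rw [mem_sym2_iff_toFinset_subset] at he ⊢
  rw [card_filter_powersetCard_subset _ _ _ he (hcard ▸ hk), hcard]

lemma sum_card_inter_sym2_powersetCard (hE : E ⊆ s.sym2) (hdiag : ∀ e ∈ E, ¬e.IsDiag)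
    (hk : 2 ≤ k) :
    ∑ S ∈ s.powersetCard k, #(E ∩ S.sym2) = #E * (#s - 2).choose (k - 2) := by
  calc ∑ S ∈ s.powersetCard k, #(E ∩ S.sym2)
      = ∑ e ∈ E, #{S ∈ s.powersetCard k | e ∈ S.sym2} := by
        simpa [bipartiteAbove, bipartiteBelow, filter_mem_eq_inter, inter_comm] using
          sum_card_bipartiteAbove_eq_sum_card_bipartiteBelow (s := s.powersetCard k) (t := E)
            (fun S e => e ∈ S.sym2)
    _ = #E * (#s - 2).choose (k - 2) := by
        rw [sum_congr rfl fun e he => card_filter_powersetCard_mem_sym2 (hE he) (hdiag e he) hk,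
          sum_const, smul_eq_mul]

lemma exists_mem_powersetCard_card_mul_choose_two_le (hE : E ⊆ s.sym2)
    (hdiag : ∀ e ∈ E, ¬e.IsDiag) (hk : 2 ≤ k) (hks : k ≤ #s) :
    ∃ S ∈ s.powersetCard k, #E * k.choose 2 ≤ (#s).choose 2 * #(E ∩ S.sym2) := by
  set c := (#s - 2).choose (k - 2)
  have hne : (s.powersetCard k).Nonempty := powersetCard_nonempty.2 hks
  obtain ⟨S, hS, hcS⟩ : ∃ S ∈ s.powersetCard k, #E * c ≤ (#s).choose k * #(E ∩ S.sym2) := by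
    refine exists_le_of_sum_le hne (le_of_eq ?_)
    rw [sum_const, ← mul_sum, sum_card_inter_sym2_powersetCard hE hdiag hk, card_powersetCard,
      smul_eq_mul]
  refine ⟨S, hS, Nat.le_of_mul_le_mul_right ?_ (Nat.choose_pos (by omega) : 0 < c)⟩
  calc #E * k.choose 2 * c = #E * c * k.choose 2 := by ring
    _ ≤ (#s).choose k * #(E ∩ S.sym2) * k.choose 2 := Nat.mul_le_mul_right _ hcS
    _ = (#s).choose k * k.choose 2 * #(E ∩ S.sym2) := by ring
    _ = (#s).choose 2 * #(E ∩ S.sym2) * c := by rw [Nat.choose_mul hk]; ring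

end Finset

lemma SimpleGraph.ncard_setOf_mem_edgeSet_forall_mem {V : Type*} [DecidableEq V]
    (G : SimpleGraph V) [Fintype G.edgeSet] (S : Finset V) :
    ({e ∈ G.edgeSet | ∀ v ∈ e, v ∈ S} : Set (Sym2 V)).ncard = #(G.edgeFinset ∩ S.sym2) := by
  rw [← Set.ncard_coe_finset]
  congr 1
  ext e
  simp [-coe_sym2, mem_sym2_iff]

lemma Nat.choose_two_le_two_mul_sq_mul_choose_two {n k : ℕ} {β : ℝ} (hk : 2 ≤ k)
    (hn : (n : ℝ) ≤ β * k) : (n.choose 2 : ℝ) ≤ 2 * β ^ 2 * k.choose 2 := by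
  have hk' : (2 : ℝ) ≤ k := by exact_mod_cast hk
  have hn0 : (0 : ℝ) ≤ n := n.cast_nonneg
  rw [Nat.cast_choose_two, Nat.cast_choose_two]
  calc (n : ℝ) * (n - 1) / 2 ≤ (β * k) ^ 2 / 2 := by nlinarith
    _ ≤ 2 * β ^ 2 * (k * (k - 1) / 2) := by nlinarith [sq_nonneg β]

theorem stmt_6_general {V : Type*} [Fintype V] [DecidableEq V] (G : SimpleGraph V)
    (k : ℕ) (hk : 2 ≤ k) (β : ℝ) (l : ℝ)
    (V' : Finset V) (hkV' : k ≤ V'.card) (hV'β : (V'.card : ℝ) ≤ β * k)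
    (hind : l ≤ (({e ∈ G.edgeSet | ∀ v ∈ e, v ∈ V'} : Set (Sym2 V)).ncard : ℝ)) :
    ∃ S ⊆ V', S.card = k ∧
      l / (2 * β ^ 2) ≤ (({e ∈ G.edgeSet | ∀ v ∈ e, v ∈ S} : Set (Sym2 V)).ncard : ℝ) := by
  classical
  set E := G.edgeFinset ∩ V'.sym2
  obtain ⟨S, hS, hES⟩ := exists_mem_powersetCard_card_mul_choose_two_le (E := E)
    inter_subset_right
    (fun e he => G.not_isDiag_of_mem_edgeSet (by simpa using mem_of_mem_inter_left he)) hk hkV'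
  obtain ⟨hSV', hSk⟩ := mem_powersetCard.1 hS
  have hinter : E ∩ S.sym2 = G.edgeFinset ∩ S.sym2 := by
    rw [inter_assoc, inter_eq_right.2 (sym2_mono hSV')]
  refine ⟨S, hSV', hSk, ?_⟩
  rw [G.ncard_setOf_mem_edgeSet_forall_mem] at hind ⊢
  rw [← hinter]
  have hk2 : (0 : ℝ) < k.choose 2 := by exact_mod_cast Nat.choose_pos hk
  have hEle : (#E : ℝ) ≤ 2 * β ^ 2 * #(E ∩ S.sym2) := by
    refine le_of_mul_le_mul_right ?_ hk2
    calc (#E : ℝ) * k.choose 2 ≤ (#V').choose 2 * #(E ∩ S.sym2) := by exact_mod_cast hES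
      _ ≤ 2 * β ^ 2 * k.choose 2 * #(E ∩ S.sym2) := by
        gcongr; exact Nat.choose_two_le_two_mul_sq_mul_choose_two hk hV'β
      _ = 2 * β ^ 2 * #(E ∩ S.sym2) * k.choose 2 := by ring
  exact div_le_of_le_mul₀ (by positivity) (by positivity)
    ((hind.trans hEle).trans_eq (mul_comm _ _))

/-- Counting step in the DkS hardness reductions: a vertex set `V'` of size between `k`
and `β·k` inducing at least `l` edges contains a `k`-vertex subset inducing at least
`l/(2β²)` edges. -/
theorem stmt_6 {V : Type*} [Fintype V] [DecidableEq V] (G : SimpleGraph V)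
    (k : ℕ) (hk : 2 ≤ k) (β : ℝ) (hβ : 1 ≤ β) (l : ℝ) (hl : 0 ≤ l)
    (V' : Finset V) (hkV' : k ≤ V'.card) (hV'β : (V'.card : ℝ) ≤ β * k)
    (hind : l ≤ (({e ∈ G.edgeSet | ∀ v ∈ e, v ∈ V'} : Set (Sym2 V)).ncard : ℝ)) :
    ∃ S ⊆ V', S.card = k ∧
      l / (2 * β ^ 2) ≤ (({e ∈ G.edgeSet | ∀ v ∈ e, v ∈ S} : Set (Sym2 V)).ncard : ℝ) :=
  stmt_6_general G k hk β l V' hkV' hV'β hind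
end

section
/- Let k ≥ 1 and let M : Matrix (Fin (k+1)) (Fin (k+1)) ℝ be entrywise nonnegative. Suppose that for every nonempty set R of row indices and every nonempty set C of column indices, the number of pairs (i,j) ∈ R × C with M(i,j) ≠ 0 is at most |R| + |C| − 1, and suppose that the total number of pairs (i,j) with M(i,j) ≠ 0 equals 2k + 1. Then there exist indices i and j such that M(i,0) ≠ 0, M(0,j) ≠ 0, and ¬(i = 0 ∧ j = 0) (i.e., the entries M(i,0) and M(0,j) are in two distinct positions). -/
/-!
If the first row vanished, all nonzero entries would sit in the `k × (k+1)` submatrix of the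
other rows, which by the support bound carries at most `2k` of them; symmetrically for the first
column. If `(0, 0)` were the only nonzero entry of the first row and of the first column, the
other `2k` nonzero entries would sit in the `k × k` submatrix avoiding both, which carries at
most `2k - 1`.
-/

open Finset

namespace Matrix

variable {m n α : Type*} [Fintype m] [Fintype n] [Zero α] [DecidableEq α]

def nonzeros (M : Matrix m n α) : Finset (m × n) :=
  univ.filter fun ij => M ij.1 ij.2 ≠ 0

/-- The bipartite graph of nonzero entries is a forest; this is the support bound of a basic
solution of the transportation LP. -/
def HasForestSupport (M : Matrix m n α) : Prop :=
  ∀ R : Finset m, ∀ C : Finset n, R.Nonempty → C.Nonempty →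
    #((R ×ˢ C).filter fun ij => M ij.1 ij.2 ≠ 0) ≤ #R + #C - 1

variable {M : Matrix m n α}

theorem HasForestSupport.card_le {S : Finset (m × n)} {R : Finset m} {C : Finset n}
    (hM : M.HasForestSupport) (hR : R.Nonempty) (hC : C.Nonempty)
    (hS : S ⊆ M.nonzeros) (hSRC : S ⊆ R ×ˢ C) : #S ≤ #R + #C - 1 :=
  le_trans (card_le_card fun _ hij => mem_filter.2 ⟨hSRC hij, (mem_filter.1 (hS hij)).2⟩)
    (hM R C hR hC)

theorem HasForestSupport.exists_ne_zero_in_row [DecidableEq m] [Nontrivial m]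
    (hM : M.HasForestSupport)
    (hcard : Fintype.card m + Fintype.card n - 2 < #M.nonzeros) (i : m) : ∃ j, M i j ≠ 0 := by
  by_contra! hi
  obtain ⟨⟨-, j⟩, -⟩ : M.nonzeros.Nonempty := card_pos.1 (by omega)
  obtain ⟨i', hi'⟩ := exists_ne i
  have hsub : M.nonzeros ⊆ univ.erase i ×ˢ univ := fun ij hij => by
    refine mem_product.2 ⟨mem_erase.2 ⟨fun h => ?_, mem_univ _⟩, mem_univ _⟩
    exact (mem_filter.1 hij).2 (h ▸ hi ij.2)
  have := hM.card_le ⟨i', mem_erase.2 ⟨hi', mem_univ _⟩⟩ ⟨j, mem_univ _⟩ subset_rfl hsub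
  rw [card_erase_of_mem (mem_univ _), card_univ, card_univ] at this
  have := Fintype.one_lt_card (α := m)
  omega

theorem HasForestSupport.exists_ne_zero_in_col [DecidableEq n] [Nontrivial n]
    (hM : M.HasForestSupport)
    (hcard : Fintype.card m + Fintype.card n - 2 < #M.nonzeros) (j : n) : ∃ i, M i j ≠ 0 := by
  by_contra! hj
  obtain ⟨⟨i, -⟩, -⟩ : M.nonzeros.Nonempty := card_pos.1 (by omega)
  obtain ⟨j', hj'⟩ := exists_ne j
  have hsub : M.nonzeros ⊆ univ ×ˢ univ.erase j := fun ij hij => by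
    refine mem_product.2 ⟨mem_univ _, mem_erase.2 ⟨fun h => ?_, mem_univ _⟩⟩
    exact (mem_filter.1 hij).2 (h ▸ hj ij.1)
  have := hM.card_le ⟨i, mem_univ _⟩ ⟨j', mem_erase.2 ⟨hj', mem_univ _⟩⟩ subset_rfl hsub
  rw [card_erase_of_mem (mem_univ _), card_univ, card_univ] at this
  have := Fintype.one_lt_card (α := n)
  omega

theorem HasForestSupport.card_nonzeros_le_of_isolated [DecidableEq m] [DecidableEq n]
    [Nontrivial m] [Nontrivial n] (hM : M.HasForestSupport) {i : m} {j : n}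
    (hrow : ∀ j', M i j' ≠ 0 → j' = j) (hcol : ∀ i', M i' j ≠ 0 → i' = i) :
    #M.nonzeros ≤ Fintype.card m + Fintype.card n - 2 := by
  obtain ⟨i', hi'⟩ := exists_ne i
  obtain ⟨j', hj'⟩ := exists_ne j
  have hsub : M.nonzeros.erase (i, j) ⊆ univ.erase i ×ˢ univ.erase j := fun ij hij => by
    obtain ⟨hne, hij⟩ := mem_erase.1 hij
    have hnz := (mem_filter.1 hij).2
    refine mem_product.2 ⟨mem_erase.2 ⟨fun hi => ?_, mem_univ _⟩,
      mem_erase.2 ⟨fun hj => ?_, mem_univ _⟩⟩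
    · exact hne (Prod.ext hi (hrow _ (hi ▸ hnz)))
    · exact hne (Prod.ext (hcol _ (hj ▸ hnz)) hj)
  have := hM.card_le ⟨i', mem_erase.2 ⟨hi', mem_univ _⟩⟩
    ⟨j', mem_erase.2 ⟨hj', mem_univ _⟩⟩ (erase_subset _ _) hsub
  rw [card_erase_of_mem (mem_univ _), card_erase_of_mem (mem_univ _), card_univ,
    card_univ] at this
  have := pred_card_le_card_erase (s := M.nonzeros) (a := (i, j))
  have := Fintype.one_lt_card (α := m)
  have := Fintype.one_lt_card (α := n)
  omega

end Matrix

theorem stmt_9_general (k : ℕ) (hk : 1 ≤ k) (M : Matrix (Fin (k + 1)) (Fin (k + 1)) ℝ)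
    (hsub : ∀ R C : Finset (Fin (k + 1)), R.Nonempty → C.Nonempty →
      ((R ×ˢ C).filter fun ij => M ij.1 ij.2 ≠ 0).card ≤ R.card + C.card - 1)
    (htot : (Finset.univ.filter
        fun ij : Fin (k + 1) × Fin (k + 1) => M ij.1 ij.2 ≠ 0).card = 2 * k + 1) :
    ∃ i j : Fin (k + 1), M i 0 ≠ 0 ∧ M 0 j ≠ 0 ∧ ¬(i = 0 ∧ j = 0) := by
  have : Nontrivial (Fin (k + 1)) := Fin.nontrivial_iff_two_le.2 (by omega)
  have hM : M.HasForestSupport := hsub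
  have hcard : #M.nonzeros = 2 * k + 1 := htot
  have hbig : Fintype.card (Fin (k + 1)) + Fintype.card (Fin (k + 1)) - 2 < #M.nonzeros := by
    simp only [Fintype.card_fin, hcard]
    omega
  obtain ⟨i, hi⟩ := hM.exists_ne_zero_in_col hbig 0
  obtain ⟨j, hj⟩ := hM.exists_ne_zero_in_row hbig 0
  by_contra! hsep
  have := hM.card_nonzeros_le_of_isolated (i := 0) (j := 0)
    (fun j' hj' => (hsep i j' hi hj').2) (fun i' hi' => (hsep i' j hi' hj).1)
  omega

/-- Structural claim for constructing the contracted auxiliary graph `H'` in NVLDP: a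
nonnegative `(k+1)×(k+1)` matrix whose every nonempty submatrix has at most `|R|+|C|-1`
nonzero entries and which has exactly `2k+1` nonzero entries in total has nonzero entries
in the first column and in the first row occupying two distinct positions. -/
theorem stmt_9 (k : ℕ) (hk : 1 ≤ k) (M : Matrix (Fin (k + 1)) (Fin (k + 1)) ℝ)
    (hM : ∀ i j, 0 ≤ M i j)
    (hsub : ∀ R C : Finset (Fin (k + 1)), R.Nonempty → C.Nonempty →
      ((R ×ˢ C).filter fun ij => M ij.1 ij.2 ≠ 0).card ≤ R.card + C.card - 1)
    (htot : (Finset.univ.filter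
        fun ij : Fin (k + 1) × Fin (k + 1) => M ij.1 ij.2 ≠ 0).card = 2 * k + 1) :
    ∃ i j : Fin (k + 1), M i 0 ≠ 0 ∧ M 0 j ≠ 0 ∧ ¬(i = 0 ∧ j = 0) :=
  stmt_9_general k hk M hsub htot
end

section
/- Let V be a finite type, A : V → V → Prop the adjacency relation of a directed graph G, and s, t ∈ V. Define the subdivided digraph H on vertex set V ⊕ ((V × V) × Fin 3) whose arcs are, for each pair (u,v) with A(u,v): inl u → inr ((u,v),0), inr ((u,v),0) → inr ((u,v),1), inr ((u,v),1) → inr ((u,v),2), and inr ((u,v),2) → inl v, and no other arcs. Let F* be any set of arcs of H, and let E* := {(u,v) : A(u,v) and at least one of the four arcs of the subdivision path of (u,v) belongs to F*}. Then inl t is unreachable from inl s in H after deleting the arcs in F* if and only if t is unreachable from s in G after deleting the arcs in E*. -/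
/-!
A walk in `G` minus `E*` lifts to `H` minus `F*` by running through the whole subdivision path
of each arc it uses. Conversely, an internal vertex of a subdivision path has exactly one
out-neighbour, so a walk in `H` minus `F*` ending at an original vertex that enters the path of
`uv` must leave it at `v` after traversing all four of its arcs; hence `uv ∉ E*`.
-/

/-- Adjacency relation of the subdivided auxiliary digraph `H` used for the downgrading
LP (DLP): each arc `uv` of `G` is replaced by a directed path of four arcs through three
new vertices `((u,v), 0)`, `((u,v), 1)`, `((u,v), 2)`. -/
def subdivAdj {V : Type*} (A : V → V → Prop) :
    (V ⊕ ((V × V) × Fin 3)) → (V ⊕ ((V × V) × Fin 3)) → Prop :=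
  fun x y => ∃ u v, A u v ∧
    ((x = Sum.inl u ∧ y = Sum.inr ((u, v), 0)) ∨
     (x = Sum.inr ((u, v), 0) ∧ y = Sum.inr ((u, v), 1)) ∨
     (x = Sum.inr ((u, v), 1) ∧ y = Sum.inr ((u, v), 2)) ∨
     (x = Sum.inr ((u, v), 2) ∧ y = Sum.inl v))

open Relation

namespace Subdiv

variable {V : Type*}

def subdivArc (u v : V) : Fin 4 → (V ⊕ ((V × V) × Fin 3)) × (V ⊕ ((V × V) × Fin 3))
  | 0 => (Sum.inl u, Sum.inr ((u, v), 0))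
  | 1 => (Sum.inr ((u, v), 0), Sum.inr ((u, v), 1))
  | 2 => (Sum.inr ((u, v), 1), Sum.inr ((u, v), 2))
  | 3 => (Sum.inr ((u, v), 2), Sum.inl v)

theorem subdivAdj_iff (A : V → V → Prop) (x y : V ⊕ ((V × V) × Fin 3)) :
    subdivAdj A x y ↔ ∃ u v k, A u v ∧ subdivArc u v k = (x, y) := by
  constructor
  · rintro ⟨u, v, huv, ⟨rfl, rfl⟩ | ⟨rfl, rfl⟩ | ⟨rfl, rfl⟩ | ⟨rfl, rfl⟩⟩
    exacts [⟨u, v, 0, huv, rfl⟩, ⟨u, v, 1, huv, rfl⟩, ⟨u, v, 2, huv, rfl⟩, ⟨u, v, 3, huv, rfl⟩]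
  · rintro ⟨u, v, k, huv, hk⟩
    refine ⟨u, v, huv, ?_⟩
    fin_cases k <;> simp only [subdivArc, Prod.mk.injEq] at hk <;> simp [hk]

variable (A : V → V → Prop) (F : Set ((V ⊕ ((V × V) × Fin 3)) × (V ⊕ ((V × V) × Fin 3))))

def HDel (x y : V ⊕ ((V × V) × Fin 3)) : Prop :=
  subdivAdj A x y ∧ (x, y) ∉ F

def touchedArcs : Set (V × V) :=
  {p | A p.1 p.2 ∧ ∃ k, subdivArc p.1 p.2 k ∈ F}

def GDel (u v : V) : Prop :=
  A u v ∧ (u, v) ∉ touchedArcs A F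

theorem exists_subdivArc_mem_iff (u v : V) :
    (∃ k, subdivArc u v k ∈ F) ↔ subdivArc u v 0 ∈ F ∨ subdivArc u v 1 ∈ F ∨
      subdivArc u v 2 ∈ F ∨ subdivArc u v 3 ∈ F := by
  constructor
  · rintro ⟨k, hk⟩
    fin_cases k <;> simp_all
  · rintro (h | h | h | h) <;> exact ⟨_, h⟩

variable {A F}

theorem reflTransGen_hDel_of_gDel {u v : V} (h : GDel A F u v) :
    ReflTransGen (HDel A F) (Sum.inl u) (Sum.inl v) := by
  obtain ⟨huv, hcut⟩ := h
  have arc : ∀ k, HDel A F (subdivArc u v k).1 (subdivArc u v k).2 := fun k =>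
    ⟨(subdivAdj_iff A _ _).2 ⟨u, v, k, huv, rfl⟩, fun hk => hcut ⟨huv, k, hk⟩⟩
  exact .head (arc 0) <| .head (arc 1) <| .head (arc 2) <| .single (arc 3)

variable (A F) in
/-- The potential of the backward direction: `Sum.inl u` is read as `u`, and the internal
vertex `i` of the path of `uv` as "the arcs of that path after vertex `i` survive, and `v`
reaches `t`". -/
def ReachesInG (t : V) : V ⊕ ((V × V) × Fin 3) → Prop
  | Sum.inl u => ReflTransGen (GDel A F) u t
  | Sum.inr ((u, v), i) =>
      A u v ∧ (∀ k : Fin 4, i.val < k.val → subdivArc u v k ∉ F) ∧ ReflTransGen (GDel A F) v t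

theorem reachesInG_of_hDel {t : V} {x y : V ⊕ ((V × V) × Fin 3)} (hxy : HDel A F x y)
    (hy : ReachesInG A F t y) : ReachesInG A F t x := by
  obtain ⟨hadj, hxyF⟩ := hxy
  obtain ⟨u, v, k, huv, hk⟩ := (subdivAdj_iff A x y).1 hadj
  fin_cases k <;> simp only [subdivArc, Prod.mk.injEq] at hk <;> obtain ⟨rfl, rfl⟩ := hk
  · obtain ⟨-, hF, hvt⟩ := hy
    refine .head ⟨huv, fun ⟨_, k, hk⟩ => ?_⟩ hvt
    fin_cases k
    exacts [hxyF hk, hF 1 (by decide) hk, hF 2 (by decide) hk, hF 3 (by decide) hk]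
  · obtain ⟨-, hF, hvt⟩ := hy
    refine ⟨huv, fun k hk => ?_, hvt⟩
    obtain rfl | hk : k = 1 ∨ (1 : Fin 3).val < k.val := by omega
    exacts [hxyF, hF k hk]
  · obtain ⟨-, hF, hvt⟩ := hy
    refine ⟨huv, fun k hk => ?_, hvt⟩
    obtain rfl | hk : k = 2 ∨ (2 : Fin 3).val < k.val := by omega
    exacts [hxyF, hF k hk]
  · refine ⟨huv, fun k hk => ?_, hy⟩
    obtain rfl : k = 3 := by omega
    exact hxyF

theorem reflTransGen_hDel_iff (s t : V) :
    ReflTransGen (HDel A F) (Sum.inl s) (Sum.inl t) ↔ ReflTransGen (GDel A F) s t :=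
  ⟨fun h => h.head_induction_on (motive := fun x _ => ReachesInG A F t x) .refl
      fun hxy _ => reachesInG_of_hDel hxy,
    fun h => ReflTransGen.lift' Sum.inl (fun _ _ => reflTransGen_hDel_of_gDel) s t h⟩

end Subdiv

open Subdiv in
theorem stmt_10_general {V : Type*} (A : V → V → Prop) (s t : V)
    (Fstar : Set ((V ⊕ ((V × V) × Fin 3)) × (V ⊕ ((V × V) × Fin 3)))) :
    (¬ Relation.ReflTransGen
        (fun x y => subdivAdj A x y ∧ (x, y) ∉ Fstar) (Sum.inl s) (Sum.inl t))
      ↔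
    (¬ Relation.ReflTransGen
        (fun u v => A u v ∧
          (u, v) ∉ {p : V × V | A p.1 p.2 ∧
            ((Sum.inl p.1, Sum.inr ((p.1, p.2), (0 : Fin 3))) ∈ Fstar ∨
             (Sum.inr ((p.1, p.2), (0 : Fin 3)), Sum.inr ((p.1, p.2), (1 : Fin 3))) ∈ Fstar ∨
             (Sum.inr ((p.1, p.2), (1 : Fin 3)), Sum.inr ((p.1, p.2), (2 : Fin 3))) ∈ Fstar ∨
             (Sum.inr ((p.1, p.2), (2 : Fin 3)), Sum.inl p.2) ∈ Fstar)}) s t) := by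
  convert (reflTransGen_hDel_iff (A := A) (F := Fstar) s t).not using 3
  · rfl
  · ext u v
    exact and_congr_right' <| not_congr <| and_congr_right' (exists_subdivArc_mem_iff Fstar u v).symm

/-- Cut correspondence for the DLP auxiliary graph: a set `F*` of subdivided arcs is an
`st`-cut of `H` exactly when the set `E*` of original arcs one of whose four copies lies
in `F*` is an `st`-cut of `G`. -/
theorem stmt_10 {V : Type*} [Fintype V] (A : V → V → Prop) (s t : V)
    (Fstar : Set ((V ⊕ ((V × V) × Fin 3)) × (V ⊕ ((V × V) × Fin 3)))) :
    (¬ Relation.ReflTransGen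
        (fun x y => subdivAdj A x y ∧ (x, y) ∉ Fstar) (Sum.inl s) (Sum.inl t))
      ↔
    (¬ Relation.ReflTransGen
        (fun u v => A u v ∧
          (u, v) ∉ {p : V × V | A p.1 p.2 ∧
            ((Sum.inl p.1, Sum.inr ((p.1, p.2), (0 : Fin 3))) ∈ Fstar ∨
             (Sum.inr ((p.1, p.2), (0 : Fin 3)), Sum.inr ((p.1, p.2), (1 : Fin 3))) ∈ Fstar ∨
             (Sum.inr ((p.1, p.2), (1 : Fin 3)), Sum.inr ((p.1, p.2), (2 : Fin 3))) ∈ Fstar ∨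
             (Sum.inr ((p.1, p.2), (2 : Fin 3)), Sum.inl p.2) ∈ Fstar)}) s t) :=
  stmt_10_general A s t Fstar
end

section
/- Let V be a finite type, A : V → V → Prop the adjacency relation of a directed graph G, and s, t ∈ V. Define the digraph G' on vertex set V ⊕ (V × V) whose arcs are, for each pair (u,v) with A(u,v): inl u → inr (u,v) and inr (u,v) → inl v, and no other arcs. Let X' be a set of vertices of G' with inl s ∉ X' and inl t ∉ X', let X := {v ∈ V : inl v ∈ X'} and Y := {(u,v) : A(u,v) ∧ inr (u,v) ∈ X'}. Then inl t is unreachable from inl s in G' restricted to vertices outside X' if and only if t is unreachable from s in G via the relation A''(u,v) := A(u,v) ∧ u ∉ X ∧ v ∉ X ∧ (u,v) ∉ Y (i.e., after deleting the vertices in X and the arcs in Y from G). -/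
/-- Adjacency relation of the auxiliary digraph `G'` used in the bicriteria algorithm for
WNVIP: each arc `(u,v)` of `G` is subdivided by a new vertex `inr (u,v)`. -/
def subdivVAdj {V : Type*} (A : V → V → Prop) :
    (V ⊕ (V × V)) → (V ⊕ (V × V)) → Prop :=
  fun x y => ∃ u v, A u v ∧
    ((x = Sum.inl u ∧ y = Sum.inr (u, v)) ∨ (x = Sum.inr (u, v) ∧ y = Sum.inl v))

/-!
Every walk in the subdivided digraph `G'` alternates between original vertices and subdivision
vertices, so a walk between original vertices is the same thing as a walk in `G` in which each
arc `(u, v)` is traversed through `inr (u, v)`. Avoiding `X'` along such a walk means avoiding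
the vertices `X` and, at each arc, the subdivision vertex, i.e. the arcs `Y`.
-/

open Sum

namespace Relation

variable {α β : Type*} {r : α ⊕ β → α ⊕ β → Prop}

theorem reflTransGen_inl_inl_iff_of_bipartite (hll : ∀ a b, ¬ r (inl a) (inl b))
    (hrr : ∀ c d, ¬ r (inr c) (inr d)) {a b : α} :
    ReflTransGen r (inl a) (inl b) ↔
      ReflTransGen (fun a b => ∃ c, r (inl a) (inr c) ∧ r (inr c) (inl b)) a b := by
  set r₂ : α → α → Prop := fun a b => ∃ c, r (inl a) (inr c) ∧ r (inr c) (inl b)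
  constructor
  · intro h
    suffices key : ∀ x, ReflTransGen r (inl a) x →
        Sum.elim (ReflTransGen r₂ a) (fun c => ∃ b, ReflTransGen r₂ a b ∧ r (inl b) (inr c)) x
      from key _ h
    intro x hx
    induction hx with
    | refl => exact .refl
    | @tail y z _ hyz ih =>
      rcases y with y | y <;> rcases z with z | z
      · exact absurd hyz (hll y z)
      · exact ⟨y, ih, hyz⟩
      · obtain ⟨b, hab, hby⟩ := ih
        exact hab.tail ⟨y, hby, hyz⟩
      · exact absurd hyz (hrr y z)
  · intro h
    induction h with
    | refl => exact .refl
    | tail _ hbc ih =>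
      obtain ⟨c, h₁, h₂⟩ := hbc
      exact (ih.tail h₁).tail h₂

end Relation

section subdivVAdj

variable {V : Type*} {A : V → V → Prop}

theorem not_subdivVAdj_inl_inl (u v : V) : ¬ subdivVAdj A (inl u) (inl v) := by
  simp [subdivVAdj]

theorem not_subdivVAdj_inr_inr (p q : V × V) : ¬ subdivVAdj A (inr p) (inr q) := by
  simp [subdivVAdj]

theorem subdivVAdj_inl_inr_iff {u : V} {p : V × V} :
    subdivVAdj A (inl u) (inr p) ↔ A p.1 p.2 ∧ p.1 = u := by
  obtain ⟨v, w⟩ := p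
  simp [subdivVAdj, eq_comm]

theorem subdivVAdj_inr_inl_iff {p : V × V} {w : V} :
    subdivVAdj A (inr p) (inl w) ↔ A p.1 p.2 ∧ p.2 = w := by
  obtain ⟨u, v⟩ := p
  simp only [subdivVAdj, reduceCtorEq, false_and, inr.injEq, Prod.mk.injEq, inl.injEq, false_or]
  constructor
  · rintro ⟨u, v, hA, ⟨rfl, rfl⟩, rfl⟩
    exact ⟨hA, rfl⟩
  · rintro ⟨hA, rfl⟩
    exact ⟨u, v, hA, ⟨rfl, rfl⟩, rfl⟩

end subdivVAdj

theorem stmt_11_general {V : Type*} (A : V → V → Prop) (s t : V)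
    (X' : Set (V ⊕ (V × V))) :
    (¬ Relation.ReflTransGen
        (fun x y => subdivVAdj A x y ∧ x ∉ X' ∧ y ∉ X') (Sum.inl s) (Sum.inl t))
      ↔
    (¬ Relation.ReflTransGen
        (fun u v => A u v ∧ u ∉ {v : V | Sum.inl v ∈ X'} ∧ v ∉ {v : V | Sum.inl v ∈ X'} ∧
          (u, v) ∉ {p : V × V | A p.1 p.2 ∧ Sum.inr p ∈ X'}) s t) := by
  refine not_congr ?_
  rw [Relation.reflTransGen_inl_inl_iff_of_bipartite
    (fun u v h => not_subdivVAdj_inl_inl u v h.1) (fun p q h => not_subdivVAdj_inr_inr p q h.1)]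
  congr! 3 with u v
  simp only [subdivVAdj_inl_inr_iff, subdivVAdj_inr_inl_iff, Set.mem_ofPred_eq]
  constructor
  · rintro ⟨⟨u', v'⟩, ⟨⟨hA, rfl⟩, hu, hp⟩, ⟨-, rfl⟩, -, hv⟩
    exact ⟨hA, hu, hv, fun h => hp h.2⟩
  · rintro ⟨hA, hu, hv, hp⟩
    exact ⟨(u, v), ⟨⟨hA, rfl⟩, hu, fun h => hp ⟨hA, h⟩⟩, ⟨hA, rfl⟩, fun h => hp ⟨hA, h⟩, hv⟩

/-- Correspondence between `st`-vertex cuts of the subdivided graph `G'` and mixed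
vertex-and-arc `st`-cuts of `G`. -/
theorem stmt_11 {V : Type*} [Fintype V] (A : V → V → Prop) (s t : V)
    (X' : Set (V ⊕ (V × V))) (hs : Sum.inl s ∉ X') (ht : Sum.inl t ∉ X') :
    (¬ Relation.ReflTransGen
        (fun x y => subdivVAdj A x y ∧ x ∉ X' ∧ y ∉ X') (Sum.inl s) (Sum.inl t))
      ↔
    (¬ Relation.ReflTransGen
        (fun u v => A u v ∧ u ∉ {v : V | Sum.inl v ∈ X'} ∧ v ∉ {v : V | Sum.inl v ∈ X'} ∧
          (u, v) ∉ {p : V × V | A p.1 p.2 ∧ Sum.inr p ∈ X'}) s t) :=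
  stmt_11_general A s t X'
end

section
/- Let G be a finite simple graph and let H be the graph with vertex set {s, t} ⊔ V(G) ⊔ E(G) (writing t_e for the vertex of H corresponding to edge e of G) and with edge set: {s,v} for every v ∈ V(G); {v, t_e} whenever v is an endpoint of e; and {t_e, t} for every e ∈ E(G). Let Y ⊆ V(G), and let F be an inclusion-minimal subset of {{t_e, t} : e ∈ E(G)} such that deleting the vertices Y and the edges F from H leaves no s–t path. Then F = {{t_e, t} : e ∈ E(G), e has at least one endpoint not in Y}; in particular |F| = |E(G)| − |E_Y|, where E_Y denotes the set of edges of G with both endpoints in Y. -/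
/-- Vertex type of the auxiliary graph `H` used in the DkS hardness reductions:
`Sum.inl 0` is the source `s`, `Sum.inl 1` is the sink `t`, `Sum.inr (Sum.inl v)` is the
original vertex `v` of `G`, and `Sum.inr (Sum.inr e)` is the subdivision vertex `t_e`
of the edge `e` of `G`. -/
abbrev AuxV {V : Type*} (G : SimpleGraph V) : Type _ := Fin 2 ⊕ (V ⊕ G.edgeSet)

/-- Adjacency of the auxiliary graph `H`: `s` is joined to every original vertex, each
subdivision vertex `t_e` is joined to the endpoints of `e`, and `t` is joined to every
subdivision vertex. -/
def auxAdj {V : Type*} (G : SimpleGraph V) : AuxV G → AuxV G → Prop := fun x y =>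
  (∃ v : V, (x = Sum.inl 0 ∧ y = Sum.inr (Sum.inl v)) ∨
            (x = Sum.inr (Sum.inl v) ∧ y = Sum.inl 0)) ∨
  (∃ (v : V) (e : G.edgeSet), v ∈ (e : Sym2 V) ∧
      ((x = Sum.inr (Sum.inl v) ∧ y = Sum.inr (Sum.inr e)) ∨
       (x = Sum.inr (Sum.inr e) ∧ y = Sum.inr (Sum.inl v)))) ∨
  (∃ e : G.edgeSet, (x = Sum.inr (Sum.inr e) ∧ y = Sum.inl 1) ∨
                    (x = Sum.inl 1 ∧ y = Sum.inr (Sum.inr e)))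

/-- Deleting the vertices in `Y` and the edges in `F` from the auxiliary graph `H`
leaves no `s`–`t` path. -/
def noSTPath {V : Type*} (G : SimpleGraph V) (Y : Set (AuxV G))
    (F : Set (Sym2 (AuxV G))) : Prop :=
  ¬ Relation.ReflTransGen
      (fun x y => auxAdj G x y ∧ x ∉ Y ∧ y ∉ Y ∧ s(x, y) ∉ F)
      (Sum.inl 0) (Sum.inl 1)

/-! The edges `{t_e, t}` with `e ⊄ Y` form an `s`–`t` cut once `Y` is interdicted: from `s` one
can only reach `t_e` through an endpoint of `e` outside `Y`. Conversely, for every such `e`,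
picking an endpoint `v ∉ Y` gives the path `s, v, t_e, t`, whose only cuttable edge is
`{t_e, t}`, so every cut contains these edges and a minimal one is exactly them. -/

namespace AuxV

variable {V : Type*} (G : SimpleGraph V)

abbrev sinkEdge (e : G.edgeSet) : Sym2 (AuxV G) := s(Sum.inr (Sum.inr e), Sum.inl 1)

abbrev interdicted (Y : Set V) : Set (AuxV G) := (fun v => Sum.inr (Sum.inl v)) '' Y

abbrev nonInducedSinkEdges (Y : Set V) : Set (Sym2 (AuxV G)) :=
  {p | ∃ e : G.edgeSet, (∃ v ∈ (e : Sym2 V), v ∉ Y) ∧ p = sinkEdge G e}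

variable {G}

lemma sinkEdge_injective : Function.Injective (sinkEdge G) := by
  intro e₁ e₂ h
  simpa using h

theorem noSTPath_nonInducedSinkEdges (Y : Set V) :
    noSTPath G (interdicted G Y) (nonInducedSinkEdges G Y) := by
  intro h
  suffices reach : ∀ x, Relation.ReflTransGen (fun x y => auxAdj G x y ∧ x ∉ interdicted G Y ∧
      y ∉ interdicted G Y ∧ s(x, y) ∉ nonInducedSinkEdges G Y) (Sum.inl 0) x →
      x ≠ Sum.inl 1 ∧ ∀ e : G.edgeSet, x = Sum.inr (Sum.inr e) → ∃ v ∈ (e : Sym2 V), v ∉ Y from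
    (reach _ h).1 rfl
  intro x hx
  induction hx with
  | refl => simp
  | tail _ step ih =>
    obtain ⟨hadj, hxY, -, hcut⟩ := step
    rcases hadj with ⟨v, ⟨-, rfl⟩ | ⟨-, rfl⟩⟩ |
      ⟨v, e, hv, ⟨rfl, rfl⟩ | ⟨-, rfl⟩⟩ | ⟨e, ⟨rfl, rfl⟩ | ⟨rfl, -⟩⟩
    · simp
    · simp
    · refine ⟨by simp, fun e' he' => ?_⟩
      obtain rfl : e = e' := by simpa using he'
      exact ⟨v, hv, fun hvY => hxY ⟨v, hvY, rfl⟩⟩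
    · simp
    · exact absurd ⟨e, ih.2 e rfl, rfl⟩ hcut
    · exact absurd rfl ih.1

theorem nonInducedSinkEdges_subset_of_noSTPath {Y : Set V} {F : Set (Sym2 (AuxV G))}
    (hFsub : F ⊆ {p | ∃ e, p = sinkEdge G e}) (hcut : noSTPath G (interdicted G Y) F) :
    nonInducedSinkEdges G Y ⊆ F := by
  rintro _ ⟨e, ⟨v, hv, hvY⟩, rfl⟩
  by_contra hF
  have not_mem_F {x y : AuxV G} (hx : x ≠ Sum.inl 1) (hy : y ≠ Sum.inl 1) : s(x, y) ∉ F := by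
    rintro hxy
    obtain ⟨e', he'⟩ := hFsub hxy
    rw [Sym2.eq_iff] at he'
    rcases he' with ⟨-, h⟩ | ⟨h, -⟩
    exacts [hy h, hx h]
  have hv' : (Sum.inr (Sum.inl v) : AuxV G) ∉ interdicted G Y := by simp [hvY]
  refine hcut (.head ⟨Or.inl ⟨v, .inl ⟨rfl, rfl⟩⟩, by simp, hv', not_mem_F (by simp) (by simp)⟩ ?_)
  refine .head ⟨Or.inr (Or.inl ⟨v, e, hv, .inl ⟨rfl, rfl⟩⟩), hv', by simp,
    not_mem_F (by simp) (by simp)⟩ ?_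
  exact .single ⟨Or.inr (Or.inr ⟨e, .inl ⟨rfl, rfl⟩⟩), by simp, by simp, hF⟩

theorem ncard_nonInducedSinkEdges [Finite V] (Y : Set V) :
    (nonInducedSinkEdges G Y).ncard =
      G.edgeSet.ncard - {e ∈ G.edgeSet | ∀ v ∈ e, v ∈ Y}.ncard := by
  have himage : nonInducedSinkEdges G Y =
      sinkEdge G '' {e : G.edgeSet | ∃ v ∈ (e : Sym2 V), v ∉ Y} := by
    ext p
    simp only [Set.mem_image, Set.mem_ofPred_eq]
    exact exists_congr fun e => and_congr_right' eq_comm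
  have hval : Subtype.val '' {e : G.edgeSet | ∃ v ∈ (e : Sym2 V), v ∉ Y} =
      G.edgeSet \ {e ∈ G.edgeSet | ∀ v ∈ e, v ∈ Y} := by
    ext e
    simp only [Set.mem_image, Set.mem_ofPred_eq, Set.mem_sdiff, Subtype.exists, exists_and_right,
      exists_eq_right, not_forall, not_and, exists_prop]
    exact and_congr_right fun he => (imp_iff_right he).symm
  rw [himage, Set.ncard_image_of_injective _ sinkEdge_injective,
    ← Set.ncard_image_of_injective _ Subtype.val_injective, hval,
    Set.ncard_sdiff (fun _ h => h.1)]

end AuxV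

open AuxV in
/-- Claim `claimwbudget`: any inclusion-minimal cut `F` among edges incident to `t`
(after interdicting `Y ⊆ V(G)`) consists exactly of the edges `{t_e, t}` for edges `e`
of `G` not induced by `Y`; in particular `|F| = |E(G)| - |E_Y|`. -/
theorem stmt_12 {V : Type*} [Fintype V] (G : SimpleGraph V)
    (Y : Set V) (F : Set (Sym2 (AuxV G)))
    (hFsub : F ⊆ {p | ∃ e : G.edgeSet, p = s(Sum.inr (Sum.inr e), Sum.inl 1)})
    (hcut : noSTPath G ((fun v => (Sum.inr (Sum.inl v) : AuxV G)) '' Y) F)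
    (hmin : ∀ F' ⊆ F, noSTPath G ((fun v => (Sum.inr (Sum.inl v) : AuxV G)) '' Y) F' →
      F' = F) :
    F = {p | ∃ e : G.edgeSet, (∃ v ∈ (e : Sym2 V), v ∉ Y) ∧
          p = s(Sum.inr (Sum.inr e), Sum.inl 1)} ∧
    F.ncard = G.edgeSet.ncard - {e ∈ G.edgeSet | ∀ v ∈ e, v ∈ Y}.ncard := by
  have hF : F = nonInducedSinkEdges G Y :=
    (hmin _ (nonInducedSinkEdges_subset_of_noSTPath hFsub hcut)
      (noSTPath_nonInducedSinkEdges Y)).symm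
  exact ⟨hF, hF ▸ ncard_nonInducedSinkEdges Y⟩
end

section
/- Let G be a finite simple graph and let H be the graph with vertex set {s, t} ⊔ V(G) ⊔ E(G) (writing t_e for the vertex of H corresponding to edge e of G) and with edge set: {s,v} for every v ∈ V(G); {v, t_e} whenever v is an endpoint of e; and {t_e, t} for every e ∈ E(G). Let Y ⊆ V(G) ∪ {t_e : e ∈ E(G)} and F ⊆ E(H) be such that deleting the vertices Y and the edges F from H leaves no s–t path. Define Ȳ := (Y ∩ V(G)) ∪ {u ∈ V(G) : u is an endpoint of some edge e of G with t_e ∈ Y}. Then |Ȳ| ≤ 2·|Y|, and deleting the vertices Ȳ and the edges F from H also leaves no s–t path. -/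
/-- The replacement set `Ȳ`: keep the original vertices of `Y`, and replace every
interdicted subdivision vertex `t_e` by the two endpoints of `e`. -/
def replaceSubdiv {V : Type*} (G : SimpleGraph V) (Y : Set (AuxV G)) : Set (AuxV G) :=
  {w | (w ∈ Y ∧ ∃ v : V, w = Sum.inr (Sum.inl v)) ∨
       (∃ (v : V) (e : G.edgeSet), v ∈ (e : Sym2 V) ∧ Sum.inr (Sum.inr e) ∈ Y ∧
          w = Sum.inr (Sum.inl v))}

/-!
Every vertex of `Ȳ` is the image of a vertex of `Y` under one of two maps (each `t_e` goes to
a chosen endpoint of `e`, resp. to the other one), which gives `|Ȳ| ≤ 2 |Y|`.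

For the cut property, an `s`–`t` walk avoiding `Ȳ` and `F` that enters `Y` must do so at
some `t_e ∈ Y`, since the original vertices of `Y` lie in `Ȳ`. Its predecessor there is a
neighbour of `t_e` outside `Ȳ`, hence not an endpoint of `e`, hence `t` itself: so the walk
has already reached `t` while avoiding `Y`.
-/

namespace Relation.ReflTransGen

variable {α : Type*} {r r' : α → α → Prop} {S : Set α} {a b : α}

theorem of_step_within (ha : a ∈ S)
    (hstep : ∀ x y, x ∈ S → x ≠ b → r x y → r' x y ∧ y ∈ S)
    (hab : ReflTransGen r a b) : ReflTransGen r' a b := by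
  suffices ∀ z, ReflTransGen r a z → (ReflTransGen r' a z ∧ z ∈ S) ∨ ReflTransGen r' a b by
    rcases this b hab with ⟨h, -⟩ | h <;> exact h
  intro z hz
  induction hz with
  | refl => exact Or.inl ⟨refl, ha⟩
  | @tail x y _ hxy ih =>
    rcases ih with ⟨hax, hxS⟩ | hb
    · by_cases hxb : x = b
      · exact Or.inr (hxb ▸ hax)
      · obtain ⟨hxy', hyS⟩ := hstep x y hxS hxb hxy
        exact Or.inl ⟨hax.tail hxy', hyS⟩
    · exact Or.inr hb

end Relation.ReflTransGen

section AuxGraph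

variable {V : Type*} {G : SimpleGraph V}

def subdivToEndpoint (pick : Sym2 V → V) : AuxV G → AuxV G
  | Sum.inr (Sum.inr e) => Sum.inr (Sum.inl (pick e))
  | x => x

theorem replaceSubdiv_subset_image_union (Y : Set (AuxV G)) :
    replaceSubdiv G Y ⊆
      subdivToEndpoint (·.out.1) '' Y ∪ subdivToEndpoint (·.out.2) '' Y := by
  rintro w (⟨hwY, v, rfl⟩ | ⟨v, e, hve, heY, rfl⟩)
  · exact Or.inl ⟨_, hwY, rfl⟩
  · rw [← (e : Sym2 V).out_eq, Sym2.mem_iff] at hve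
    rcases hve with rfl | rfl
    · exact Or.inl ⟨_, heY, rfl⟩
    · exact Or.inr ⟨_, heY, rfl⟩

theorem ncard_replaceSubdiv_le {Y : Set (AuxV G)} (hY : Y.Finite) :
    (replaceSubdiv G Y).ncard ≤ 2 * Y.ncard :=
  calc (replaceSubdiv G Y).ncard
      ≤ (subdivToEndpoint (·.out.1) '' Y ∪ subdivToEndpoint (·.out.2) '' Y).ncard :=
        Set.ncard_le_ncard (replaceSubdiv_subset_image_union Y)
          ((hY.image _).union (hY.image _))
    _ ≤ (subdivToEndpoint (·.out.1) '' Y).ncard + (subdivToEndpoint (·.out.2) '' Y).ncard :=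
        Set.ncard_union_le _ _
    _ ≤ Y.ncard + Y.ncard := add_le_add (Set.ncard_image_le hY) (Set.ncard_image_le hY)
    _ = 2 * Y.ncard := (two_mul _).symm

theorem eq_sink_or_endpoint_of_auxAdj_subdiv {x : AuxV G} {e : G.edgeSet}
    (h : auxAdj G x (Sum.inr (Sum.inr e))) :
    x = Sum.inl 1 ∨ ∃ v ∈ (e : Sym2 V), x = Sum.inr (Sum.inl v) := by
  rcases h with ⟨v, ⟨-, h⟩ | ⟨-, h⟩⟩ | ⟨v, e', hv, ⟨rfl, h⟩ | ⟨-, h⟩⟩ | ⟨e', ⟨-, h⟩ | ⟨rfl, -⟩⟩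
  · cases h
  · cases h
  · cases Sum.inr.inj (Sum.inr.inj h)
    exact Or.inr ⟨v, hv, rfl⟩
  · cases h
  · cases h
  · exact Or.inl rfl

theorem notMem_of_auxAdj_of_notMem_replaceSubdiv {Y : Set (AuxV G)}
    (hY : ∀ w ∈ Y, ∃ x, w = Sum.inr x) {x y : AuxV G} (hxt : x ≠ Sum.inl 1)
    (hadj : auxAdj G x y) (hx : x ∉ replaceSubdiv G Y) (hy : y ∉ replaceSubdiv G Y) :
    y ∉ Y := by
  intro hyY
  obtain ⟨v | e, rfl⟩ := hY y hyY
  · exact hy (Or.inl ⟨hyY, v, rfl⟩)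
  · rcases eq_sink_or_endpoint_of_auxAdj_subdiv hadj with rfl | ⟨v, hv, rfl⟩
    · exact hxt rfl
    · exact hx (Or.inr ⟨v, e, hv, hyY, rfl⟩)

theorem noSTPath_replaceSubdiv {Y : Set (AuxV G)} (hY : ∀ w ∈ Y, ∃ x, w = Sum.inr x)
    {F : Set (Sym2 (AuxV G))} (hcut : noSTPath G Y F) : noSTPath G (replaceSubdiv G Y) F := by
  refine fun hpath => hcut (hpath.of_step_within (S := Yᶜ) ?_ ?_)
  · intro h
    obtain ⟨_, h⟩ := hY _ h
    exact Sum.inl_ne_inr h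
  · rintro x y hx hxt ⟨hadj, hxR, hyR, hF⟩
    have hy := notMem_of_auxAdj_of_notMem_replaceSubdiv hY hxt hadj hxR hyR
    exact ⟨⟨hadj, hx, hy, hF⟩, hy⟩

end AuxGraph

/-- Replacement step in the proof of Theorem `hardbudget`: replacing each interdicted
subdivision vertex `t_e` by the two endpoints of `e` at most doubles the number of
interdicted vertices and still leaves no `s`–`t` path. -/
theorem stmt_13 {V : Type*} [Fintype V] (G : SimpleGraph V)
    (Y : Set (AuxV G)) (hY : ∀ w ∈ Y, ∃ x, w = Sum.inr x)
    (F : Set (Sym2 (AuxV G)))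
    (hcut : noSTPath G Y F) :
    (replaceSubdiv G Y).ncard ≤ 2 * Y.ncard ∧ noSTPath G (replaceSubdiv G Y) F :=
  ⟨ncard_replaceSubdiv_le Y.toFinite, noSTPath_replaceSubdiv hY hcut⟩
end

section
/- Let G be a finite simple graph and let H be the graph with vertex set {s, t} ⊔ V(G) ⊔ E(G) (writing t_e for the vertex of H corresponding to edge e of G) and with edge set: {s,v} for every v ∈ V(G); {v, t_e} whenever v is an endpoint of e; and {t_e, t} for every e ∈ E(G). Let Y be a set of vertices of H with s, t ∉ Y, and let F ⊆ E(H) be a set of edges of H none of which is incident to s, such that deleting the vertices Y and the edges F from H leaves no s–t path. Suppose {v, t_e} ∈ F for some v ∈ V(G) and e ∈ E(G). Then deleting the vertices Y and the edges (F \ {{v, t_e}}) ∪ {{t_e, t}} from H also leaves no s–t path. -/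
open Relation

section AuxCut

variable {V : Type*} {G : SimpleGraph V} {Y : Set (AuxV G)} {F : Set (Sym2 (AuxV G))}

variable (G Y F) in
def auxCutAdj (x y : AuxV G) : Prop :=
  auxAdj G x y ∧ x ∉ Y ∧ y ∉ Y ∧ s(x, y) ∉ F

theorem noSTPath_iff :
    noSTPath G Y F ↔ ¬ ReflTransGen (auxCutAdj G Y F) (Sum.inl 0) (Sum.inl 1) :=
  Iff.rfl

theorem reflTransGen_auxCutAdj_source_inl (hs : (Sum.inl 0 : AuxV G) ∉ Y)
    (hFs : ∀ p ∈ F, (Sum.inl 0 : AuxV G) ∉ p) {w : V} (hw : (Sum.inr (Sum.inl w) : AuxV G) ∉ Y) :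
    ReflTransGen (auxCutAdj G Y F) (Sum.inl 0) (Sum.inr (Sum.inl w)) :=
  .single ⟨Or.inl ⟨w, Or.inl ⟨rfl, rfl⟩⟩, hs, hw, fun hF => hFs _ hF (Sym2.mem_mk_left _ _)⟩

theorem reflTransGen_auxCutAdj_exchange_source (hs : (Sum.inl 0 : AuxV G) ∉ Y)
    (hFs : ∀ p ∈ F, (Sum.inl 0 : AuxV G) ∉ p) {v : V} {e : G.edgeSet} {F' : Set (Sym2 (AuxV G))}
    (hFF' : F \ {s(Sum.inr (Sum.inl v), Sum.inr (Sum.inr e))} ⊆ F')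
    (het : s(Sum.inr (Sum.inr e), Sum.inl 1) ∈ F') {x : AuxV G}
    (hx : ReflTransGen (auxCutAdj G Y F') (Sum.inl 0) x) :
    ReflTransGen (auxCutAdj G Y F) (Sum.inl 0) x ∨ x = Sum.inr (Sum.inr e) := by
  have old_step : ∀ {x y}, auxCutAdj G Y F' x y →
      s(x, y) ≠ s(Sum.inr (Sum.inl v), Sum.inr (Sum.inr e)) → auxCutAdj G Y F x y :=
    fun ⟨hadj, hx, hy, hxy⟩ hne => ⟨hadj, hx, hy, fun h => hxy (hFF' ⟨h, hne⟩)⟩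
  have source_inl := @reflTransGen_auxCutAdj_source_inl _ _ _ _ hs hFs
  induction hx with
  | refl => exact Or.inl .refl
  | tail _ hxy ih =>
    obtain ⟨hadj, hxY, hyY, hxyF'⟩ := id hxy
    rcases hadj with ⟨w, ⟨rfl, rfl⟩ | ⟨rfl, rfl⟩⟩ |
      ⟨w, e', -, ⟨rfl, rfl⟩ | ⟨rfl, rfl⟩⟩ | ⟨e', ⟨rfl, rfl⟩ | ⟨rfl, rfl⟩⟩
    · exact Or.inl (source_inl hyY)
    · exact Or.inl .refl
    · by_cases he : e' = e
      · exact Or.inr (by rw [he])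
      · exact Or.inl ((source_inl hxY).tail (old_step hxy (by simp [he])))
    · exact Or.inl (source_inl hyY)
    · have he : e' ≠ e := by
        rintro rfl
        exact hxyF' het
      exact Or.inl ((ih.resolve_right (by simpa using he)).tail (old_step hxy (by simp)))
    · by_cases he : e' = e
      · exact Or.inr (by rw [he])
      · exact Or.inl ((ih.resolve_right (by simp)).tail (old_step hxy (by simp [he])))

end AuxCut

theorem stmt_15_general {V : Type*} (G : SimpleGraph V)
    (Y : Set (AuxV G)) (hs : (Sum.inl 0 : AuxV G) ∉ Y)
    (F : Set (Sym2 (AuxV G))) (hFs : ∀ p ∈ F, (Sum.inl 0 : AuxV G) ∉ p)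
    (hcut : noSTPath G Y F)
    (v : V) (e : G.edgeSet) :
    noSTPath G Y
      ((F \ {s((Sum.inr (Sum.inl v) : AuxV G), Sum.inr (Sum.inr e))}) ∪
        {s((Sum.inr (Sum.inr e) : AuxV G), Sum.inl 1)}) := by
  rw [noSTPath_iff] at hcut ⊢
  intro hpath
  exact hcut ((reflTransGen_auxCutAdj_exchange_source hs hFs Set.subset_union_left
    (by simp) hpath).resolve_right (by simp))

/-- Exchange argument in the proof of Theorem `uhard`: any cut edge between an original
vertex and a subdivision vertex `t_e` can be replaced by the edge `{t_e, t}` without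
destroying the cut. -/
theorem stmt_15 {V : Type*} [Fintype V] (G : SimpleGraph V)
    (Y : Set (AuxV G)) (hs : (Sum.inl 0 : AuxV G) ∉ Y) (ht : (Sum.inl 1 : AuxV G) ∉ Y)
    (F : Set (Sym2 (AuxV G))) (hFs : ∀ p ∈ F, (Sum.inl 0 : AuxV G) ∉ p)
    (hcut : noSTPath G Y F)
    (v : V) (e : G.edgeSet)
    (hve : s((Sum.inr (Sum.inl v) : AuxV G), Sum.inr (Sum.inr e)) ∈ F) :
    noSTPath G Y
      ((F \ {s((Sum.inr (Sum.inl v) : AuxV G), Sum.inr (Sum.inr e))}) ∪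
        {s((Sum.inr (Sum.inr e) : AuxV G), Sum.inl 1)}) :=
  stmt_15_general G Y hs F hFs hcut v e
end
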